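/- arXiv:2106.04769 — 5 statements merged into one kernel-verified Lean document; each statement's English description precedes it below -/
import Mathlib

section
/- Let G : [0,1]^n → ℝ be continuously differentiable with ∇G antitone (for a ≤ b, ∇G(a) ≥ ∇G(b) coordinate-wise) and G monotone (∇G ≥ 0). Then for every y, o ∈ [0,1]^n, ⟨o ∨ y − y, ∇G(y)⟩ ≥ G(o ∨ y) − G(y), where ∨ denotes coordinate-wise maximum. -/
/-!
Along the segment `t ↦ y + t • (o ∨ y - y)`, `t ∈ [0, 1]`, every point lies in the cube and
dominates `y`, while the direction `o ∨ y - y` is nonnegative. Antitonicity of `∇G` therefore makes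
the directional derivative at each point of the segment at most the one at `y`, and the mean value
theorem turns this into the bound on `G (o ∨ y) - G y`.
-/

open scoped RealInnerProductSpace

section Gradient

variable {E : Type*} [NormedAddCommGroup E] [InnerProductSpace ℝ E] [CompleteSpace E] {G : E → ℝ}

theorem DifferentiableAt.hasDerivAt_comp_add_smul {x v : E} {t : ℝ}
    (hG : DifferentiableAt ℝ G (x + t • v)) :
    HasDerivAt (fun s : ℝ => G (x + s • v)) ⟪gradient G (x + t • v), v⟫ t := by
  rw [inner_gradient_left]
  have hline : HasDerivAt (fun s : ℝ => x + s • v) v t := by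
    simpa using ((hasDerivAt_id t).smul_const v).const_add x
  exact hG.hasFDerivAt.comp_hasDerivAt t hline

theorem Differentiable.sub_le_inner_gradient_of_inner_gradient_add_smul_le
    (hG : Differentiable ℝ G) {x v : E}
    (h : ∀ t ∈ Set.Ioo (0 : ℝ) 1, ⟪gradient G (x + t • v), v⟫ ≤ ⟪gradient G x, v⟫) :
    G (x + v) - G x ≤ ⟪gradient G x, v⟫ := by
  have hline : Continuous fun t : ℝ => G (x + t • v) := by have := hG.continuous; fun_prop
  obtain ⟨c, hc, hslope⟩ := exists_hasDerivAt_eq_slope (fun t : ℝ => G (x + t • v)) _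
    zero_lt_one hline.continuousOn fun t _ => (hG _).hasDerivAt_comp_add_smul
  simpa [hslope] using h c hc

end Gradient

namespace EuclideanSpace

variable {ι : Type*}

theorem inner_le_inner_of_le_of_nonneg [Fintype ι] {u w v : EuclideanSpace ℝ ι}
    (huw : ∀ i, u i ≤ w i) (hv : ∀ i, 0 ≤ v i) : ⟪u, v⟫ ≤ ⟪w, v⟫ := by
  simp only [PiLp.inner_apply, RCLike.inner_apply, conj_trivial]
  exact Finset.sum_le_sum fun i _ => mul_le_mul_of_nonneg_left (huw i) (hv i)

theorem le_add_smul_sub_apply_le {a b : EuclideanSpace ℝ ι} (hab : ∀ i, a i ≤ b i) {t : ℝ}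
    (ht : t ∈ Set.Ioo (0 : ℝ) 1) (i : ι) :
    a i ≤ (a + t • (b - a)) i ∧ (a + t • (b - a)) i ≤ b i := by
  simp only [PiLp.add_apply, PiLp.smul_apply, PiLp.sub_apply, smul_eq_mul]
  have hba := sub_nonneg.2 (hab i)
  constructor <;> nlinarith [ht.1, ht.2]

end EuclideanSpace

theorem monotone_dr_submodular_inner_sup_ge_general (n : ℕ) (G : EuclideanSpace ℝ (Fin n) → ℝ)
    (hG : ContDiff ℝ 1 G)
    (hAnti : ∀ a b : EuclideanSpace ℝ (Fin n),
      (∀ i, 0 ≤ a i ∧ a i ≤ 1) → (∀ i, 0 ≤ b i ∧ b i ≤ 1) → (∀ i, a i ≤ b i) →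
      ∀ i, gradient G b i ≤ gradient G a i)
    (y o : EuclideanSpace ℝ (Fin n))
    (hy : ∀ i, 0 ≤ y i ∧ y i ≤ 1) (ho : ∀ i, 0 ≤ o i ∧ o i ≤ 1) :
    ⟪(show EuclideanSpace ℝ (Fin n) from WithLp.toLp 2 (fun i => max (o i) (y i))) - y, gradient G y⟫ ≥
      G (show EuclideanSpace ℝ (Fin n) from WithLp.toLp 2 (fun i => max (o i) (y i))) - G y := by
  set s : EuclideanSpace ℝ (Fin n) := WithLp.toLp 2 (fun i => max (o i) (y i))
  have hys : ∀ i, y i ≤ s i := fun i => le_max_right _ _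
  have hs1 : ∀ i, s i ≤ 1 := fun i => max_le (ho i).2 (hy i).2
  have key := Differentiable.sub_le_inner_gradient_of_inner_gradient_add_smul_le
    (hG.differentiable one_ne_zero) (x := y) (v := s - y) fun t ht => by
      have hseg := EuclideanSpace.le_add_smul_sub_apply_le hys ht
      exact EuclideanSpace.inner_le_inner_of_le_of_nonneg (hAnti y _ hy
        (fun i => ⟨(hy i).1.trans (hseg i).1, (hseg i).2.trans (hs1 i)⟩) fun i => (hseg i).1)
        fun i => sub_nonneg.2 (hys i)
  rw [add_sub_cancel] at key
  show G s - G y ≤ ⟪s - y, gradient G y⟫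
  rwa [real_inner_comm]

theorem monotone_dr_submodular_inner_sup_ge (n : ℕ) (G : EuclideanSpace ℝ (Fin n) → ℝ)
    (hG : ContDiff ℝ 1 G)
    (hAnti : ∀ a b : EuclideanSpace ℝ (Fin n),
      (∀ i, 0 ≤ a i ∧ a i ≤ 1) → (∀ i, 0 ≤ b i ∧ b i ≤ 1) → (∀ i, a i ≤ b i) →
      ∀ i, gradient G b i ≤ gradient G a i)
    (hMono : ∀ a : EuclideanSpace ℝ (Fin n), (∀ i, 0 ≤ a i ∧ a i ≤ 1) →
      ∀ i, 0 ≤ gradient G a i)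
    (y o : EuclideanSpace ℝ (Fin n))
    (hy : ∀ i, 0 ≤ y i ∧ y i ≤ 1) (ho : ∀ i, 0 ≤ o i ∧ o i ≤ 1) :
    ⟪(show EuclideanSpace ℝ (Fin n) from WithLp.toLp 2 (fun i => max (o i) (y i))) - y, gradient G y⟫ ≥
      G (show EuclideanSpace ℝ (Fin n) from WithLp.toLp 2 (fun i => max (o i) (y i))) - G y :=
  monotone_dr_submodular_inner_sup_ge_general n G hG hAnti y o hy ho
end

section
/- Let G : [0,1]^n → ℝ be continuously differentiable, DR-submodular (gradient antitone), monotone (gradient nonnegative), and C : [0,1]^n → ℝ concave and monotone. Set F = G + C. Then for all y, o ∈ [0,1]^n: ⟨o, ∇F(y)⟩ ≥ F(o) − F(y). -/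
/-!
For the concave part, `C o - C y ≤ ⟪∇C y, o - y⟫ ≤ ⟪o, ∇C y⟫` by the first-order condition and
monotonicity. For the DR-submodular part, compare with `z = y ⊔ o`: monotonicity gives
`G o ≤ G z`, the mean value theorem on `[y, z]` together with the antitone gradient gives
`G z - G y ≤ ⟪∇G y, z - y⟫`, and `0 ≤ z - y ≤ o` with `∇G y ≥ 0` bounds this by `⟪o, ∇G y⟫`.
-/
open scoped RealInnerProductSpace

section Gradient

variable {E : Type*} [NormedAddCommGroup E] [InnerProductSpace ℝ E] [CompleteSpace E]

theorem gradient_fun_add {f g : E → ℝ} {x : E} (hf : DifferentiableAt ℝ f x)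
    (hg : DifferentiableAt ℝ g x) :
    gradient (fun y => f y + g y) x = gradient f x + gradient g x := by
  simp only [gradient, fderiv_fun_add hf hg, map_add]

theorem exists_mem_segment_sub_eq_inner_gradient {f : E → ℝ} (hf : Differentiable ℝ f)
    (x y : E) : ∃ z ∈ segment ℝ x y, f y - f x = ⟪gradient f z, y - x⟫ := by
  simp only [inner_gradient_left]
  exact domain_mvt (fun z _ => (hf z).hasFDerivAt.hasFDerivWithinAt) convex_univ trivial trivial

theorem ConcaveOn.sub_le_inner_gradient {f : E → ℝ} {s : Set E} {x y : E}
    (hconc : ConcaveOn ℝ s f) (hx : x ∈ s) (hy : y ∈ s) (hf : DifferentiableAt ℝ f x) :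
    f y - f x ≤ ⟪gradient f x, y - x⟫ := by
  have hline : ConcaveOn ℝ (Set.Icc 0 1) (f ∘ AffineMap.lineMap (k := ℝ) x y) :=
    (hconc.comp_affineMap _).subset (hconc.1.mapsTo_lineMap hx hy) (convex_Icc 0 1)
  have hderiv : HasDerivAt (f ∘ AffineMap.lineMap (k := ℝ) x y) ⟪gradient f x, y - x⟫ 0 := by
    rw [inner_gradient_left]
    exact hf.hasFDerivAt.comp_hasDerivAt_of_eq 0 AffineMap.hasDerivAt_lineMap
      (AffineMap.lineMap_apply_zero x y).symm
  simpa [slope_def_field] using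
    hline.slope_le_of_hasDerivAt (by simp) (by simp) zero_lt_one hderiv

end Gradient

section UnitCube

variable {ι : Type*}

def unitCube (ι : Type*) : Set (EuclideanSpace ℝ ι) := {x | ∀ i, 0 ≤ x i ∧ x i ≤ 1}

theorem convex_unitCube : Convex ℝ (unitCube ι) := by
  intro x hx y hy a b ha hb hab i
  simp only [PiLp.add_apply, PiLp.smul_apply, smul_eq_mul]
  constructor <;> nlinarith [hx i, hy i]

theorem EuclideanSpace.le_apply_of_mem_segment {x y p : EuclideanSpace ℝ ι}
    (hxy : ∀ i, x i ≤ y i) (hp : p ∈ segment ℝ x y) (i : ι) : x i ≤ p i := by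
  obtain ⟨a, b, -, hb, hab, rfl⟩ := hp
  obtain rfl : a = 1 - b := by linarith
  simp only [PiLp.add_apply, PiLp.smul_apply, smul_eq_mul]
  nlinarith [hxy i]

variable [Fintype ι]

theorem EuclideanSpace.inner_le_inner_of_le {u v w : EuclideanSpace ℝ ι}
    (huv : ∀ i, u i ≤ v i) (hw : ∀ i, 0 ≤ w i) : ⟪u, w⟫ ≤ ⟪v, w⟫ := by
  simp only [PiLp.inner_apply, RCLike.inner_apply, conj_trivial]
  exact Finset.sum_le_sum fun i _ => mul_le_mul_of_nonneg_left (huv i) (hw i)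

theorem sub_le_inner_gradient_of_antitone_gradient {G : EuclideanSpace ℝ ι → ℝ}
    (hG : Differentiable ℝ G)
    (hanti : ∀ a b : EuclideanSpace ℝ ι, a ∈ unitCube ι → b ∈ unitCube ι → (∀ i, a i ≤ b i) →
      ∀ i, gradient G b i ≤ gradient G a i)
    (hmono : ∀ a ∈ unitCube ι, ∀ i, 0 ≤ gradient G a i)
    {y o : EuclideanSpace ℝ ι} (hy : y ∈ unitCube ι) (ho : o ∈ unitCube ι) :
    G o - G y ≤ ⟪o, gradient G y⟫ := by
  set z : EuclideanSpace ℝ ι := WithLp.toLp 2 fun i => max (y i) (o i)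
  have hyz : ∀ i, y i ≤ z i := fun i => le_max_left _ _
  have hoz : ∀ i, o i ≤ z i := fun i => le_max_right _ _
  have hz : z ∈ unitCube ι := fun i => ⟨(hy i).1.trans (hyz i), max_le (hy i).2 (ho i).2⟩
  obtain ⟨p, hp, hGop⟩ := exists_mem_segment_sub_eq_inner_gradient hG o z
  obtain ⟨q, hq, hGyq⟩ := exists_mem_segment_sub_eq_inner_gradient hG y z
  have hGoz : 0 ≤ ⟪z - o, gradient G p⟫ := by
    simpa using EuclideanSpace.inner_le_inner_of_le (u := 0) (v := z - o)
      (fun i => by simpa using hoz i) (hmono p (convex_unitCube.segment_subset ho hz hp))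
  have hDR : ⟪gradient G q, z - y⟫ ≤ ⟪gradient G y, z - y⟫ :=
    EuclideanSpace.inner_le_inner_of_le
      (hanti y q hy (convex_unitCube.segment_subset hy hz hq)
        (EuclideanSpace.le_apply_of_mem_segment hyz hq))
      (fun i => by simpa using hyz i)
  have hzy : ⟪z - y, gradient G y⟫ ≤ ⟪o, gradient G y⟫ :=
    EuclideanSpace.inner_le_inner_of_le
      (fun i => by
        rw [PiLp.sub_apply, sub_le_iff_le_add]
        exact max_le (by linarith [(ho i).1]) (by linarith [(hy i).1]))
      (hmono y hy)
  calc G o - G y ≤ G z - G y := by linarith [real_inner_comm (z - o) (gradient G p)]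
    _ = ⟪gradient G q, z - y⟫ := hGyq
    _ ≤ ⟪gradient G y, z - y⟫ := hDR
    _ = ⟪z - y, gradient G y⟫ := real_inner_comm _ _
    _ ≤ ⟪o, gradient G y⟫ := hzy

end UnitCube

theorem inner_opt_gradient_ge_diff (n : ℕ) (G C : EuclideanSpace ℝ (Fin n) → ℝ)
    (hG : ContDiff ℝ 1 G) (hC : ContDiff ℝ 1 C)
    (hAnti : ∀ a b : EuclideanSpace ℝ (Fin n),
      (∀ i, 0 ≤ a i ∧ a i ≤ 1) → (∀ i, 0 ≤ b i ∧ b i ≤ 1) → (∀ i, a i ≤ b i) →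
      ∀ i, gradient G b i ≤ gradient G a i)
    (hGmono : ∀ a : EuclideanSpace ℝ (Fin n), (∀ i, 0 ≤ a i ∧ a i ≤ 1) →
      ∀ i, 0 ≤ gradient G a i)
    (hConc : ConcaveOn ℝ {x : EuclideanSpace ℝ (Fin n) | ∀ i, 0 ≤ x i ∧ x i ≤ 1} C)
    (hCmono : ∀ a : EuclideanSpace ℝ (Fin n), (∀ i, 0 ≤ a i ∧ a i ≤ 1) →
      ∀ i, 0 ≤ gradient C a i)
    (y o : EuclideanSpace ℝ (Fin n))
    (hy : ∀ i, 0 ≤ y i ∧ y i ≤ 1) (ho : ∀ i, 0 ≤ o i ∧ o i ≤ 1) :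
    ⟪o, gradient (fun x => G x + C x) y⟫ ≥
      (G o + C o) - (G y + C y) := by
  have hGd := hG.differentiable one_ne_zero
  have hCd := hC.differentiable one_ne_zero
  have hGpart : G o - G y ≤ ⟪o, gradient G y⟫ :=
    sub_le_inner_gradient_of_antitone_gradient hGd hAnti hGmono hy ho
  have hCpart : C o - C y ≤ ⟪o, gradient C y⟫ :=
    calc C o - C y ≤ ⟪gradient C y, o - y⟫ := hConc.sub_le_inner_gradient hy ho (hCd y)
      _ = ⟪o - y, gradient C y⟫ := real_inner_comm _ _
      _ ≤ ⟪o, gradient C y⟫ :=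
        EuclideanSpace.inner_le_inner_of_le (fun i => by simpa using (hy i).1) (hCmono y hy)
  rw [gradient_fun_add (hGd y) (hCd y), inner_add_right]
  linarith
end

section
/- Let C : [0,1]^n → ℝ be concave and nonnegative, and let o, y ∈ [0,1]^n and M ∈ (0,1) satisfy 0 ≤ y ≤ (1−M)·1 coordinate-wise. Then C(o ⊙ (1 − y) + y) ≥ M·C(o), where ⊙ denotes coordinate-wise multiplication and 1 the all-ones vector. -/
/-! The point `o ⊙ (1 - y) + y` is the convex combination `M • o + (1 - M) • z` with
`z = ((1 - M - y) ⊙ o + y) / (1 - M)`, which lies in the unit cube because `y ≤ 1 - M`.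
Concavity gives `C (M • o + (1 - M) • z) ≥ M * C o + (1 - M) * C z`, and `C z ≥ 0`. -/

theorem ConcaveOn.mul_le_apply_add_of_nonneg {E : Type*} [AddCommMonoid E] [Module ℝ E]
    {s : Set E} {f : E → ℝ} (hf : ConcaveOn ℝ s f) {x z : E} (hx : x ∈ s) (hz : z ∈ s)
    (hfz : 0 ≤ f z) {a b : ℝ} (ha : 0 ≤ a) (hb : 0 ≤ b) (hab : a + b = 1) :
    a * f x ≤ f (a • x + b • z) :=
  calc a * f x ≤ a • f x + b • f z := by
        simpa only [smul_eq_mul] using le_add_of_nonneg_right (mul_nonneg hb hfz)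
    _ ≤ f (a • x + b • z) := hf.2 hx hz ha hb hab

theorem one_sub_sub_mul_add_div_one_sub_mem_unitInterval {M o y : ℝ} (ho : 0 ≤ o ∧ o ≤ 1)
    (hy : 0 ≤ y ∧ y ≤ 1 - M) (hM : M < 1) :
    0 ≤ ((1 - M - y) * o + y) / (1 - M) ∧ ((1 - M - y) * o + y) / (1 - M) ≤ 1 := by
  have hM' : 0 < 1 - M := by linarith
  exact ⟨div_nonneg (by nlinarith) hM'.le, (div_le_one hM').2 (by nlinarith)⟩

theorem mul_add_one_sub_mul_div_one_sub {M : ℝ} (hM : M ≠ 1) (o y : ℝ) :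
    M * o + (1 - M) * (((1 - M - y) * o + y) / (1 - M)) = o * (1 - y) + y := by
  have : 1 - M ≠ 0 := sub_ne_zero.2 hM.symm
  field_simp
  ring

theorem concave_measured_lower_bound (n : ℕ) (C : EuclideanSpace ℝ (Fin n) → ℝ)
    (hConc : ConcaveOn ℝ {x : EuclideanSpace ℝ (Fin n) | ∀ i, 0 ≤ x i ∧ x i ≤ 1} C)
    (hNonneg : ∀ x : EuclideanSpace ℝ (Fin n), (∀ i, 0 ≤ x i ∧ x i ≤ 1) → 0 ≤ C x)
    (o y : EuclideanSpace ℝ (Fin n)) (ho : ∀ i, 0 ≤ o i ∧ o i ≤ 1)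
    (M : ℝ) (hM : M ∈ Set.Ioo (0 : ℝ) 1)
    (hy : ∀ i, 0 ≤ y i ∧ y i ≤ 1 - M) :
    C (WithLp.toLp 2 (fun i => o i * (1 - y i) + y i) : EuclideanSpace ℝ (Fin n)) ≥ M * C o := by
  obtain ⟨hM0, hM1⟩ := hM
  let z : EuclideanSpace ℝ (Fin n) :=
    WithLp.toLp 2 fun i => ((1 - M - y i) * o i + y i) / (1 - M)
  have hz : ∀ i, 0 ≤ z i ∧ z i ≤ 1 := fun i =>
    one_sub_sub_mul_add_div_one_sub_mem_unitInterval (ho i) (hy i) hM1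
  have hcomb : M • o + (1 - M) • z = WithLp.toLp 2 fun i => o i * (1 - y i) + y i := by
    ext i
    exact mul_add_one_sub_mul_div_one_sub hM1.ne (o i) (y i)
  rw [← hcomb]
  exact hConc.mul_le_apply_add_of_nonneg ho hz (hNonneg z hz) hM0.le (by linarith) (by ring)
end

section
/- Let G : [0,1]^n → ℝ be continuously differentiable, DR-submodular (gradient antitone), monotone, and nonnegative. Then for all o, y ∈ [0,1]^n: ⟨o − y, ∇G(y)⟩ ≥ G(o) − 2·G(y). -/
/-!
Split `o - y = (o ⊔ y - y) + (o ⊓ y - y)` coordinatewise. Along the segment from `y` to `o ⊔ y`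
every coordinate increases, so the antitone gradient only decreases and
`G (o ⊔ y) - G y ≤ ⟪o ⊔ y - y, ∇G y⟫`; along the segment to `o ⊓ y` every coordinate decreases,
the gradient increases and the same bound holds for `o ⊓ y`. Adding the two bounds leaves
`G (o ⊔ y) + G (o ⊓ y) - 2 G y`, and `G o ≤ G (o ⊔ y)` (monotonicity), `0 ≤ G (o ⊓ y)` finish.
-/

open scoped RealInnerProductSpace
open Set

section Segment

variable {E : Type*} [NormedAddCommGroup E] [InnerProductSpace ℝ E] [CompleteSpace E]
  {G : E → ℝ} {a b : E}

theorem hasDerivAt_comp_segment {t : ℝ} (hG : DifferentiableAt ℝ G (a + t • (b - a))) :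
    HasDerivAt (fun s : ℝ => G (a + s • (b - a))) ⟪b - a, gradient G (a + t • (b - a))⟫ t := by
  have hpath : HasDerivAt (fun s : ℝ => a + s • (b - a)) (b - a) t := by
    simpa using ((hasDerivAt_id t).smul_const (b - a)).const_add a
  exact (hG.hasGradientAt.hasFDerivAt.comp_hasDerivAt t hpath).congr_deriv
    (by rw [InnerProductSpace.toDual_apply_apply, real_inner_comm])

theorem sub_le_of_forall_inner_gradient_segment_le (hG : Differentiable ℝ G) {C : ℝ}
    (h : ∀ t ∈ Icc (0 : ℝ) 1, ⟪b - a, gradient G (a + t • (b - a))⟫ ≤ C) :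
    G b - G a ≤ C := by
  have hderiv (t : ℝ) := hasDerivAt_comp_segment (a := a) (b := b) (hG (a + t • (b - a)))
  obtain ⟨c, hc, hslope⟩ := exists_hasDerivAt_eq_slope _ _ zero_lt_one
    (fun t _ => (hderiv t).continuousAt.continuousWithinAt) (fun t _ => hderiv t)
  have hc' := h c (Ioo_subset_Icc_self hc)
  rw [hslope] at hc'
  simpa using hc'

end Segment

section Coordinatewise

variable {ι : Type*}

theorem convex_unitCube_s11 : Convex ℝ {x : EuclideanSpace ℝ ι | ∀ i, 0 ≤ x i ∧ x i ≤ 1} := by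
  intro x hx z hz a b ha hb hab i
  simp only [PiLp.add_apply, PiLp.smul_apply, smul_eq_mul]
  constructor <;> nlinarith [hx i, hz i]

theorem add_smul_sub_apply (a b : EuclideanSpace ℝ ι) (t : ℝ) (i : ι) :
    (a + t • (b - a)) i = a i + t * (b i - a i) := by
  simp

variable [Fintype ι] {G : EuclideanSpace ℝ ι → ℝ} {s : Set (EuclideanSpace ℝ ι)}

theorem inner_le_inner_of_forall_mul_le {d g g' : EuclideanSpace ℝ ι}
    (h : ∀ i, d i * g i ≤ d i * g' i) : ⟪d, g⟫ ≤ ⟪d, g'⟫ := by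
  simp only [PiLp.inner_apply, RCLike.inner_apply, conj_trivial]
  exact Finset.sum_le_sum fun i _ => by simpa only [mul_comm] using h i

theorem sub_le_inner_gradient_of_le (hs : Convex ℝ s) (hG : Differentiable ℝ G)
    (hAnti : ∀ a b, a ∈ s → b ∈ s → (∀ i, a i ≤ b i) → ∀ i, gradient G b i ≤ gradient G a i)
    {y z : EuclideanSpace ℝ ι} (hy : y ∈ s) (hz : z ∈ s) (hyz : ∀ i, y i ≤ z i) :
    G z - G y ≤ ⟪z - y, gradient G y⟫ := by
  refine sub_le_of_forall_inner_gradient_segment_le hG fun t ht => ?_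
  have hle (i : ι) : y i ≤ (y + t • (z - y)) i := by
    rw [add_smul_sub_apply]; nlinarith [hyz i, ht.1]
  have hgrad := hAnti _ _ hy (hs.add_smul_sub_mem hy hz ht) hle
  exact inner_le_inner_of_forall_mul_le fun i => by
    simpa using mul_le_mul_of_nonneg_left (hgrad i) (sub_nonneg.2 (hyz i))

theorem sub_le_inner_gradient_of_ge (hs : Convex ℝ s) (hG : Differentiable ℝ G)
    (hAnti : ∀ a b, a ∈ s → b ∈ s → (∀ i, a i ≤ b i) → ∀ i, gradient G b i ≤ gradient G a i)
    {y z : EuclideanSpace ℝ ι} (hy : y ∈ s) (hz : z ∈ s) (hzy : ∀ i, z i ≤ y i) :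
    G z - G y ≤ ⟪z - y, gradient G y⟫ := by
  refine sub_le_of_forall_inner_gradient_segment_le hG fun t ht => ?_
  have hle (i : ι) : (y + t • (z - y)) i ≤ y i := by
    rw [add_smul_sub_apply]; nlinarith [hzy i, ht.1]
  have hgrad := hAnti _ _ (hs.add_smul_sub_mem hy hz ht) hy hle
  exact inner_le_inner_of_forall_mul_le fun i => by
    simpa using mul_le_mul_of_nonpos_left (hgrad i) (sub_nonpos.2 (hzy i))

theorem le_of_forall_le_of_gradient_nonneg (hs : Convex ℝ s) (hG : Differentiable ℝ G)
    (hMono : ∀ a ∈ s, ∀ i, 0 ≤ gradient G a i)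
    {x z : EuclideanSpace ℝ ι} (hx : x ∈ s) (hz : z ∈ s) (hxz : ∀ i, x i ≤ z i) :
    G x ≤ G z := by
  suffices G x - G z ≤ 0 by linarith
  refine sub_le_of_forall_inner_gradient_segment_le hG fun t ht => ?_
  have hgrad := hMono _ (hs.add_smul_sub_mem hz hx ht)
  refine (inner_le_inner_of_forall_mul_le fun i => ?_).trans_eq (inner_zero_right _)
  simpa using mul_nonpos_of_nonpos_of_nonneg (sub_nonpos.2 (hxz i)) (hgrad i)

end Coordinatewise

theorem inner_o_sub_y_gradient_ge (n : ℕ) (G : EuclideanSpace ℝ (Fin n) → ℝ)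
    (hG : ContDiff ℝ 1 G)
    (hAnti : ∀ a b : EuclideanSpace ℝ (Fin n),
      (∀ i, 0 ≤ a i ∧ a i ≤ 1) → (∀ i, 0 ≤ b i ∧ b i ≤ 1) → (∀ i, a i ≤ b i) →
      ∀ i, gradient G b i ≤ gradient G a i)
    (hMono : ∀ a : EuclideanSpace ℝ (Fin n), (∀ i, 0 ≤ a i ∧ a i ≤ 1) →
      ∀ i, 0 ≤ gradient G a i)
    (hNonneg : ∀ x : EuclideanSpace ℝ (Fin n), (∀ i, 0 ≤ x i ∧ x i ≤ 1) → 0 ≤ G x)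
    (o y : EuclideanSpace ℝ (Fin n))
    (ho : ∀ i, 0 ≤ o i ∧ o i ≤ 1) (hy : ∀ i, 0 ≤ y i ∧ y i ≤ 1) :
    ⟪o - y, gradient G y⟫ ≥ G o - 2 * G y := by
  have hGd : Differentiable ℝ G := hG.differentiable one_ne_zero
  set p : EuclideanSpace ℝ (Fin n) := WithLp.toLp 2 fun i => max (o i) (y i)
  set q : EuclideanSpace ℝ (Fin n) := WithLp.toLp 2 fun i => min (o i) (y i)
  have hp : ∀ i, 0 ≤ p i ∧ p i ≤ 1 := fun i =>
    ⟨le_max_of_le_left (ho i).1, max_le (ho i).2 (hy i).2⟩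
  have hq : ∀ i, 0 ≤ q i ∧ q i ≤ 1 := fun i =>
    ⟨le_min (ho i).1 (hy i).1, min_le_of_left_le (ho i).2⟩
  have hsup : G p - G y ≤ ⟪p - y, gradient G y⟫ :=
    sub_le_inner_gradient_of_le convex_unitCube_s11 hGd hAnti hy hp fun i => le_max_right _ _
  have hinf : G q - G y ≤ ⟪q - y, gradient G y⟫ :=
    sub_le_inner_gradient_of_ge convex_unitCube_s11 hGd hAnti hy hq fun i => min_le_right _ _
  have hmono : G o ≤ G p :=
    le_of_forall_le_of_gradient_nonneg convex_unitCube_s11 hGd hMono ho hp fun i => le_max_left _ _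
  have hsplit : o - y = (p - y) + (q - y) := by
    ext i
    simp only [PiLp.add_apply, PiLp.sub_apply]
    linarith [max_add_min (o i) (y i)]
  rw [hsplit, inner_add_left]
  linarith [hNonneg q hq]
end

section
/- Let (H(i))_{i=0..N} be reals with H(0) ≤ A for some A ≥ 0, and suppose that for a threshold sequence (g_i) and constants ε ∈ (0,1), B ≥ 0, either there exists 0 ≤ i ≤ N with H(i) ≤ g_i + ε·(A + B), or for all 1 ≤ i ≤ N, H(i−1) − H(i) ≥ ε²·(H(i−1) − g_{i−1}) − ε·B/N with N = ε^{−3}. Show that under the assumption H(i) > g_i + ε·(A + B) for all i (with g_i ≥ 0), summing the recurrence yields H(N) ≤ ε·B, a contradiction; hence some index i* ≤ N satisfies H(i*) ≤ g_{i*} + ε·(A + B). -/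
/- Were `H i > g i + ε (A + B)` for every `i ≤ N`, each step of the recurrence would lower `H` by
at least `ε³ (A + B) - ε B / N = (A + B - ε B) / N`, using `N ε³ = 1`. Over `N` steps `H` would drop
by `A + B - ε B` from `H 0 ≤ A`, ending at most at `ε B - B`, below `ε (A + B) < H N`. -/

theorem add_nsmul_le_of_forall_succ_add_le {α : Type*} [AddCommMonoid α] [PartialOrder α]
    [IsOrderedAddMonoid α] {H : ℕ → α} {d : α} {n : ℕ} (h : ∀ i < n, H (i + 1) + d ≤ H i) :
    H n + n • d ≤ H 0 := by
  induction n with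
  | zero => simp
  | succ n ih =>
    calc H (n + 1) + (n + 1) • d = (H (n + 1) + d) + n • d := by rw [succ_nsmul']; abel
      _ ≤ H n + n • d := by gcongr; exact h n n.lt_succ_self
      _ ≤ H 0 := ih fun i hi => h i (hi.trans n.lt_succ_self)

theorem low_H_exists (N : ℕ) (hN : 0 < N) (ε A B : ℝ)
    (hε : ε ∈ Set.Ioo (0 : ℝ) 1) (hNε : (N : ℝ) * ε ^ 3 = 1)
    (hA : 0 ≤ A) (hB : 0 ≤ B)
    (g H : ℕ → ℝ) (hg : ∀ i, 0 ≤ g i) (h0 : H 0 ≤ A)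
    (hrec : ∀ i : ℕ, 1 ≤ i → i ≤ N →
      H (i - 1) - H i ≥ ε ^ 2 * (H (i - 1) - g (i - 1)) - ε * B / N) :
    ∃ i ≤ N, H i ≤ g i + ε * (A + B) := by
  by_contra! hhigh
  have hN0 : (N : ℝ) ≠ 0 := Nat.cast_ne_zero.mpr hN.ne'
  have hε3 : ε ^ 3 = 1 / N := by rw [eq_div_iff hN0, mul_comm, hNε]
  have hdrop : (A + B - ε * B) / N = ε ^ 3 * (A + B) - ε * B / N := by rw [hε3]; ring
  have hstep : ∀ i < N, H (i + 1) + (A + B - ε * B) / N ≤ H i := by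
    intro i hi
    have hr := hrec (i + 1) (by omega) hi
    rw [Nat.add_sub_cancel] at hr
    have hgap : ε ^ 3 * (A + B) ≤ ε ^ 2 * (H i - g i) :=
      calc ε ^ 3 * (A + B) = ε ^ 2 * (ε * (A + B)) := by ring
        _ ≤ ε ^ 2 * (H i - g i) := by gcongr; linarith [hhigh i hi.le]
    linarith
  have htel := add_nsmul_le_of_forall_succ_add_le hstep
  rw [nsmul_eq_mul, mul_div_cancel₀ _ hN0] at htel
  linarith [hhigh N le_rfl, hg N, mul_nonneg hε.1.le hA]
end
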